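/- arXiv:2109.15243 — 2 statements merged into one kernel-verified Lean document; each statement's English description precedes it below -/
import Mathlib

section
/- For every integer n ≥ 2, sign(h_{2n+1}) = t_n; in particular, combined with h_0 = h_3 = 0 and h_{2n} < 0 for n ≥ 1, the sequence (sign(h_n)) satisfies: sign(h_0) = sign(h_3) = 0, sign(h_{2n}) = -1 for n ≥ 1, and sign(h_{2n+1}) = t_n for n ≥ 2. -/
/-!
Unfolding the recurrence twice and using `t (2n) = t n`, `t (2n+1) = -t n` gives
`h (2n+3) = -t (n+1) * h (2n)`, so the odd-indexed terms are controlled by the even ones, and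
`a n := h (2n)` satisfies `a (n+2) = a (n+1) - e n * a n` with `e n = t (n+1) t (n+2) = ±1`.
Since `t (2k+1) = -t (2k)`, `e n = -1` for odd `n`; so whenever `e n = 1` the previous step was
`a (n+1) = a n + a (n-1)`, and the two steps give `a (n+2) = a (n-1)`. Either way `a (n+2)` is
a sum of earlier non-positive terms, one of them negative, so `h (2n) < 0` for `n ≥ 1`, and the
sign of `h (2n+1)` is that of `t n`.
-/

def t (n : ℕ) : ℤ := (-1) ^ ((Nat.digits 2 n).sum)

def h : ℕ → ℤ
  | 0 => 0
  | 1 => 1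
  | (n + 2) => t (n + 2) * h (n + 1) + h n

lemma t_eq_one_or_eq_neg_one (n : ℕ) : t n = 1 ∨ t n = -1 :=
  ((Nat.digits 2 n).sum.even_or_odd).imp Even.neg_one_pow Odd.neg_one_pow

lemma t_mul_self (n : ℕ) : t n * t n = 1 := by
  rcases t_eq_one_or_eq_neg_one n with ht | ht <;> simp [ht]

lemma sign_t (n : ℕ) : Int.sign (t n) = t n := by
  rcases t_eq_one_or_eq_neg_one n with ht | ht <;> simp [ht]

lemma t_two_mul (n : ℕ) : t (2 * n) = t n := by
  rcases Nat.eq_zero_or_pos n with rfl | hn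
  · rfl
  · have := Nat.digits_add 2 one_lt_two 0 n two_pos (Or.inr hn.ne')
    simp_all [t]

lemma t_two_mul_add_one (n : ℕ) : t (2 * n + 1) = -t n := by
  rw [t, t, add_comm, Nat.digits_add 2 one_lt_two 1 n one_lt_two (Or.inl one_ne_zero),
    List.sum_cons, pow_add, pow_one, neg_one_mul]

lemma t_two_mul_mul_t_two_mul_add_one (n : ℕ) : t (2 * n) * t (2 * n + 1) = -1 := by
  rw [t_two_mul, t_two_mul_add_one, mul_neg, t_mul_self]

theorem neg_of_recurrence {a e : ℕ → ℤ} (ha₀ : a 0 = 0) (ha₁ : a 1 < 0)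
    (he : ∀ n, e n = 1 ∨ e n = -1) (he_odd : ∀ k, e (2 * k + 1) = -1)
    (hrec : ∀ n, a (n + 2) = a (n + 1) - e n * a n) :
    ∀ n, 1 ≤ n → a n < 0 := by
  suffices key : ∀ n, a (n + 1) < 0 by
    intro n hn
    obtain ⟨m, rfl⟩ := Nat.exists_eq_add_of_le' hn
    exact key m
  intro n
  induction n using Nat.strong_induction_on with
  | _ n ih =>
    rcases n with _ | m
    · exact ha₁
    have a_nonpos : a m ≤ 0 := by
      rcases m with _ | m
      · exact ha₀.le
      · exact (ih m (by omega)).le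
    rw [hrec]
    rcases he m with hem | hem
    · obtain ⟨k, rfl | rfl⟩ := Nat.even_or_odd' m
      · rcases k with _ | j
        · simpa [ha₀] using ha₁
        -- the preceding step was an addition, so the two steps telescope to `a (2j+1)`
        have hprev : a (2 * (j + 1) + 1) = a (2 * (j + 1)) + a (2 * j + 1) := by
          rw [show 2 * (j + 1) + 1 = 2 * j + 1 + 2 by ring, hrec, he_odd]; ring_nf
        rw [hem, hprev]
        linarith [ih (2 * j) (by omega)]
      · simp [he_odd] at hem
    · rw [hem]
      linarith [ih m (by omega)]

lemma h_two_mul_add_three (n : ℕ) : h (2 * n + 3) = -t (n + 1) * h (2 * n) := by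
  have t_odd : t (2 * n + 3) = -t (n + 1) := by
    rw [show 2 * n + 3 = 2 * (n + 1) + 1 by ring, t_two_mul_add_one]
  have t_even : t (2 * n + 2) = t (n + 1) := by
    rw [show 2 * n + 2 = 2 * (n + 1) by ring, t_two_mul]
  rw [h, h, t_odd, t_even]
  linear_combination (-h (2 * n + 1)) * t_mul_self (n + 1)

lemma h_two_mul_add_four (n : ℕ) :
    h (2 * (n + 2)) = h (2 * (n + 1)) - t (n + 1) * t (n + 2) * h (2 * n) := by
  rw [show 2 * (n + 2) = 2 * n + 3 + 1 by ring, h, show 2 * n + 3 + 1 = 2 * (n + 2) by ring,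
    t_two_mul, h_two_mul_add_three, show 2 * n + 2 = 2 * (n + 1) by ring]
  ring

lemma h_two_mul_neg (n : ℕ) (hn : 1 ≤ n) : h (2 * n) < 0 :=
  neg_of_recurrence (a := fun n => h (2 * n)) (e := fun n => t (n + 1) * t (n + 2)) rfl
    (by decide)
    (fun n => by
      rcases t_eq_one_or_eq_neg_one (n + 1) with h₁ | h₁ <;>
        rcases t_eq_one_or_eq_neg_one (n + 2) with h₂ | h₂ <;> simp [h₁, h₂])
    (fun k => t_two_mul_mul_t_two_mul_add_one (k + 1))
    h_two_mul_add_four n hn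

theorem stmt3 :
    (∀ n : ℕ, 2 ≤ n → Int.sign (h (2 * n + 1)) = t n) ∧
    Int.sign (h 0) = 0 ∧ Int.sign (h 3) = 0 ∧
    (∀ n : ℕ, 1 ≤ n → Int.sign (h (2 * n)) = -1) := by
  have h_even_sign (n : ℕ) (hn : 1 ≤ n) : Int.sign (h (2 * n)) = -1 :=
    Int.sign_eq_neg_one_iff_neg.mpr (h_two_mul_neg n hn)
  refine ⟨fun n hn => ?_, rfl, ?_, h_even_sign⟩
  · obtain ⟨m, rfl⟩ := Nat.exists_eq_add_of_le' hn
    rw [show 2 * (m + 2) + 1 = 2 * (m + 1) + 3 by ring, h_two_mul_add_three, Int.sign_mul,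
      Int.sign_neg, sign_t, h_even_sign (m + 1) (by omega)]
    ring
  · simpa [h] using h_two_mul_add_three 0
end

section
/- For every k ∈ ℕ, h_{2^{2k+2}-3} = h_{2^{2k+1}-2}² + h_{2^{2k+1}-1}², and moreover h_{2^{2k+1}-1}² + h_{2^{2k+1}+1}² = h_{2^{2k+1}-2}² + h_{2^{2k+1}-1}². In particular, h_{2^{2k+2}-3} is a sum of two squares. -/
/-!
With `T x = !![x, 1; 1, 0]`, the row vector `(h (n + 1), h n)` is `(1, -1)` times
`T (t 0) * ⋯ * T (t (n + 1))`; let `P m` be this product over `j < 2 ^ m`. The second half of the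
Thue–Morse word of length `2 ^ (m + 1)` is the negation of the first half, and for odd `m` this
negation is also the reversal of the first half. As the `T x` are symmetric, this gives
`P (m + 1) = P m * (P m)ᵀ`, so for `N = 2 ^ m` and `u = (h (N - 1), h (N - 2)) = (1, -1) * P m`,
`h (2 N - 1) - h (2 N - 2) = (1, -1) * P m * (P m)ᵀ * (1, -1)ᵀ = u ⬝ᵥ u`, while
`t (2 N - 1) = 1` makes the left side `h (2 N - 3)`. The identity `h (N + 1) = h (N - 2)` is two
steps of the recurrence, since `t N = -1` and `t (N + 1) = 1`.
-/

lemma t_zero : t 0 = 1 := rfl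

lemma t_two_mul_add (n b : ℕ) (hb : b < 2) : t (2 * n + b) = (-1) ^ b * t n := by
  rcases Nat.eq_zero_or_pos (2 * n + b) with _ | hpos
  · obtain ⟨rfl, rfl⟩ : n = 0 ∧ b = 0 := by omega
    rfl
  · rw [t, t, Nat.digits_def' one_lt_two hpos, List.sum_cons, pow_add,
      show (2 * n + b) % 2 = b by omega, show (2 * n + b) / 2 = n by omega]

lemma t_one : t 1 = -1 := by
  simpa [t_zero] using t_two_mul_add 0 1 one_lt_two

lemma exists_eq_two_mul_add (j : ℕ) : ∃ q b, b < 2 ∧ j = 2 * q + b :=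
  ⟨j / 2, j % 2, Nat.mod_lt _ two_pos, (Nat.div_add_mod j 2).symm⟩

lemma t_two_pow_add (m : ℕ) {j : ℕ} (hj : j < 2 ^ m) : t (2 ^ m + j) = -t j := by
  induction m generalizing j with
  | zero =>
    obtain rfl : j = 0 := by omega
    rfl
  | succ m ih =>
    obtain ⟨q, b, hb, rfl⟩ := exists_eq_two_mul_add j
    rw [show 2 ^ (m + 1) + (2 * q + b) = 2 * (2 ^ m + q) + b by ring, t_two_mul_add _ _ hb,
      t_two_mul_add _ _ hb, ih (by omega), mul_neg]

lemma t_two_pow_sub_one_sub (m : ℕ) {j : ℕ} (hj : j < 2 ^ m) :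
    t (2 ^ m - 1 - j) = (-1) ^ m * t j := by
  induction m generalizing j with
  | zero =>
    obtain rfl : j = 0 := by omega
    rfl
  | succ m ih =>
    obtain ⟨q, b, hb, rfl⟩ := exists_eq_two_mul_add j
    have hq : q < 2 ^ m := by rw [pow_succ] at hj; omega
    rw [show 2 ^ (m + 1) - 1 - (2 * q + b) = 2 * (2 ^ m - 1 - q) + (1 - b) by
        rw [pow_succ]; omega,
      t_two_mul_add _ _ (by omega), t_two_mul_add _ _ hb, ih hq]
    interval_cases b <;> ring

open Matrix

def transfer (x : ℤ) : Matrix (Fin 2) (Fin 2) ℤ := !![x, 1; 1, 0]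

def transferProd (w : List ℤ) : Matrix (Fin 2) (Fin 2) ℤ := (w.map transfer).prod

def thueMorseWord (n : ℕ) : List ℤ := (List.range n).map t

lemma transferProd_append (u v : List ℤ) :
    transferProd (u ++ v) = transferProd u * transferProd v := by
  simp [transferProd]

lemma transpose_transferProd (w : List ℤ) : (transferProd w)ᵀ = transferProd w.reverse := by
  have : transpose ∘ transfer = transfer := funext fun x => by
    ext i j; fin_cases i <;> fin_cases j <;> rfl
  rw [transferProd, transpose_list_prod, List.map_map, this, ← List.map_reverse, transferProd]

lemma vecMul_transferProd_thueMorseWord (n : ℕ) :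
    ![1, -1] ᵥ* transferProd (thueMorseWord (n + 2)) = ![h (n + 1), h n] := by
  induction n with
  | zero =>
    ext i
    fin_cases i <;> simp [transferProd, thueMorseWord, List.range_succ, transfer, t_zero, t_one,
      h, vecMul, dotProduct, mul_apply]
  | succ n ih =>
    rw [thueMorseWord, List.range_succ, List.map_append, ← thueMorseWord, transferProd_append,
      ← vecMul_vecMul, ih]
    ext i
    fin_cases i <;> simp [transferProd, transfer, h, vecMul, dotProduct, mul_comm]

lemma thueMorseWord_two_pow_succ (m : ℕ) :
    thueMorseWord (2 ^ (m + 1)) =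
      thueMorseWord (2 ^ m) ++ (thueMorseWord (2 ^ m)).map Neg.neg := by
  simp only [thueMorseWord, pow_succ, mul_two, List.range_add, List.map_append, List.map_map,
    List.append_cancel_left_eq]
  exact List.map_congr_left fun j hj => t_two_pow_add m (List.mem_range.mp hj)

lemma reverse_thueMorseWord_two_pow (m : ℕ) :
    (thueMorseWord (2 ^ m)).reverse = (thueMorseWord (2 ^ m)).map ((-1) ^ m * ·) := by
  rw [thueMorseWord, ← List.map_reverse, List.range_eq_range', List.reverse_range', List.map_map,
    List.map_map, ← List.range_eq_range']
  exact List.map_congr_left fun j hj => by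
    simpa using t_two_pow_sub_one_sub m (List.mem_range.mp hj)

lemma transferProd_two_pow_succ_of_odd {m : ℕ} (hm : Odd m) :
    transferProd (thueMorseWord (2 ^ (m + 1))) =
      transferProd (thueMorseWord (2 ^ m)) * (transferProd (thueMorseWord (2 ^ m)))ᵀ := by
  rw [transpose_transferProd, reverse_thueMorseWord_two_pow, hm.neg_one_pow,
    thueMorseWord_two_pow_succ, transferProd_append]
  simp only [neg_one_mul]

lemma h_add_three_eq_self {m n : ℕ} (hm : m ≠ 0) (hn : n + 2 = 2 ^ m) : h (n + 3) = h n := by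
  have ht2 : t (n + 2) = -1 := by simpa [hn, t_zero] using t_two_pow_add m (j := 0) (by omega)
  have ht3 : t (n + 3) = 1 := by simpa [← hn, t_one] using t_two_pow_add m (Nat.one_lt_two_pow hm)
  rw [h, ht3, h, ht2]
  ring

lemma h_two_mul_add_one_eq_sq_add_sq {m n : ℕ} (hm : Odd m) (hn : n + 2 = 2 ^ m) :
    h (2 * n + 1) = h n ^ 2 + h (n + 1) ^ 2 := by
  have hv := vecMul_transferProd_thueMorseWord n
  have hv' := vecMul_transferProd_thueMorseWord (2 * n + 2)
  rw [hn] at hv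
  rw [show 2 * n + 2 + 2 = 2 ^ (m + 1) by rw [pow_succ]; omega] at hv'
  have key : ![h (2 * n + 3), h (2 * n + 2)] ⬝ᵥ ![1, -1] =
      ![h (n + 1), h n] ⬝ᵥ ![h (n + 1), h n] := by
    rw [← hv, ← hv', transferProd_two_pow_succ_of_odd hm, ← vecMul_vecMul, vecMul_transpose,
      dotProduct_comm, dotProduct_mulVec]
  have ht : t (2 * n + 3) = 1 := by
    simpa [t_zero, hm.add_one.neg_one_pow,
      show 2 ^ (m + 1) - 1 - 0 = 2 * n + 3 by rw [pow_succ]; omega] using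
      t_two_pow_sub_one_sub (m + 1) (j := 0) (by positivity)
  have hrec : h (2 * n + 3) = t (2 * n + 3) * h (2 * n + 2) + h (2 * n + 1) := by rw [h]
  simp only [dotProduct, Fin.sum_univ_two, cons_val_zero, cons_val_one, cons_val_fin_one, mul_one,
    mul_neg] at key
  rw [hrec, ht] at key
  linear_combination key

theorem stmt19 : ∀ k : ℕ,
    h (2 ^ (2 * k + 1) - 1) ^ 2 + h (2 ^ (2 * k + 1) + 1) ^ 2 =
      h (2 ^ (2 * k + 1) - 2) ^ 2 + h (2 ^ (2 * k + 1) - 1) ^ 2 ∧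
    h (2 ^ (2 * k + 2) - 3) =
      h (2 ^ (2 * k + 1) - 2) ^ 2 + h (2 ^ (2 * k + 1) - 1) ^ 2 ∧
    ∃ a b : ℤ, h (2 ^ (2 * k + 2) - 3) = a ^ 2 + b ^ 2 := by
  intro k
  obtain ⟨n, hn⟩ : ∃ n, n + 2 = 2 ^ (2 * k + 1) :=
    ⟨2 ^ (2 * k + 1) - 2, Nat.sub_add_cancel (Nat.le_self_pow (by omega) 2)⟩
  have hsq := h_two_mul_add_one_eq_sq_add_sq (odd_two_mul_add_one k) hn
  rw [show 2 ^ (2 * k + 2) - 3 = 2 * n + 1 by rw [pow_succ]; omega, ← hn,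
    show n + 2 - 1 = n + 1 by omega, show n + 2 + 1 = n + 3 by omega, Nat.add_sub_cancel,
    h_add_three_eq_self (by omega) hn, hsq]
  exact ⟨add_comm _ _, rfl, _, _, rfl⟩
end
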